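/- arXiv:1912.09587 — 3 statements merged into one kernel-verified Lean document; each statement's English description precedes it below -/
import Mathlib

section
/- Let R : ℝ × ℝ → (0, ∞) be C¹ in (x, t), and let V_x(x, r, t) and V_r(x, r, t) be C¹ functions defined for 0 ≤ r ≤ R(x, t). Assume the incompressibility condition ∂_r(r V_r) + r ∂_x V_x = 0 holds for all 0 < r < R(x, t), and the streamline boundary condition ∂_t R + V_x(x, R(x,t), t) ∂_x R = V_r(x, R(x,t), t) holds for all (x, t). Then the averaged incompressibility relation ∂_t(R²) + ∂_x(R² ⟨V_x⟩) = 0 holds, where ⟨V_x⟩(x, t) = (2/R(x,t)²) ∫₀^{R(x,t)} V_x(x, r, t) r dr. -/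
/-!
Since `R > 0`, `R² ⟨V_x⟩ = 2 ∫₀ᴿ V_x r dr`. Differentiating under the integral sign with the
moving endpoint `R` (Leibniz rule) gives `∫₀ᴿ r ∂ₓV_x dr + R V_x(R) ∂ₓR`, and by incompressibility
the integral is `-∫₀ᴿ ∂ᵣ(r V_r) dr = -R V_r(R)`. Hence `∂ₓ(R² ⟨V_x⟩) = 2R (V_x(R) ∂ₓR - V_r(R))`,
which is `-2R ∂ₜR = -∂ₜ(R²)` by the streamline condition.
-/

open Function Set MeasureTheory intervalIntegral ContinuousLinearMap

section Leibniz

variable {E : Type*} [NormedAddCommGroup E] [NormedSpace ℝ E] {f : ℝ → ℝ → E}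

theorem ContDiff.continuous_uncurry_deriv_left (hf : ContDiff ℝ 1 (uncurry f)) :
    Continuous (uncurry fun x r => deriv (f · r) x) := by
  have hpartial : (uncurry fun x r => deriv (f · r) x) =
      fun p => fderiv ℝ (uncurry f) p (1, 0) := by
    ext ⟨x, r⟩
    exact (((hf.differentiable one_ne_zero) (x, r)).hasFDerivAt.comp_hasDerivAt x
      ((hasDerivAt_id x).prodMk (hasDerivAt_const x r))).deriv
  rw [hpartial]
  exact (hf.continuous_fderiv one_ne_zero).clm_apply continuous_const

theorem ContDiff.hasDerivAt_left (hf : ContDiff ℝ 1 (uncurry f)) (x r : ℝ) :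
    HasDerivAt (f · r) (deriv (f · r) x) x := by
  have hdiff := hf.differentiable one_ne_zero
  exact DifferentiableAt.hasDerivAt (by fun_prop)

theorem hasDerivAt_intervalIntegral_of_contDiff (hf : ContDiff ℝ 1 (uncurry f)) (a b x₀ : ℝ) :
    HasDerivAt (fun x => ∫ r in a..b, f x r) (∫ r in a..b, deriv (f · r) x₀) x₀ := by
  have hf' := hf.continuous_uncurry_deriv_left
  obtain ⟨C, hC⟩ := ((isCompact_closedBall x₀ 1).prod (isCompact_uIcc (a := a) (b := b))
    ).exists_bound_of_continuousOn hf'.continuousOn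
  refine (hasDerivAt_integral_of_dominated_loc_of_deriv_le (F := f)
    (F' := fun x r => deriv (f · r) x) (bound := fun _ => C) (Metric.ball_mem_nhds x₀ one_pos)
    ?_ ?_ ?_ ?_ (intervalIntegrable_const (μ := volume)) ?_).2
  · exact .of_forall fun x => (hf.continuous.uncurry_left x).aestronglyMeasurable
  · exact (hf.continuous.uncurry_left x₀).intervalIntegrable a b
  · exact (hf'.uncurry_left x₀).aestronglyMeasurable
  · refine .of_forall fun r hr x hx => hC (x, r) ⟨Metric.ball_subset_closedBall hx, ?_⟩
    exact uIoc_subset_uIcc hr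
  · exact .of_forall fun r _ x _ => hf.hasDerivAt_left x r

variable [CompleteSpace E]

theorem hasStrictFDerivAt_intervalIntegral_of_contDiff (hf : ContDiff ℝ 1 (uncurry f))
    (a : ℝ) (p : ℝ × ℝ) :
    HasStrictFDerivAt (fun q : ℝ × ℝ => ∫ r in a..q.2, f q.1 r)
      ((smulRight (1 : ℝ →L[ℝ] ℝ) (∫ r in a..p.2, deriv (f · r) p.1)).coprod
        (smulRight (1 : ℝ →L[ℝ] ℝ) (f p.1 p.2))) p := by
  refine hasStrictFDerivAt_uncurry_coprod (f := fun x b => ∫ r in a..b, f x r)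
    (f₁ := fun x b => smulRight (1 : ℝ →L[ℝ] ℝ) (∫ r in a..b, deriv (f · r) x))
    (f₂ := fun x b => smulRight (1 : ℝ →L[ℝ] ℝ) (f x b))
    (.of_forall fun q => ?_) (.of_forall fun q => ?_) ?_ ?_
  · exact (hasDerivAt_intervalIntegral_of_contDiff hf a q.2 q.1).hasFDerivAt
  · exact ((hf.continuous.uncurry_left q.1).integral_hasStrictDerivAt a q.2).hasDerivAt.hasFDerivAt
  · have hprimitive := continuous_parametric_primitive_of_continuous (a₀ := a) (μ := volume)
      hf.continuous_uncurry_deriv_left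
    exact Continuous.continuousAt (by fun_prop)
  · exact Continuous.continuousAt (by fun_prop)

theorem hasDerivAt_intervalIntegral_of_contDiff_of_hasDerivAt (hf : ContDiff ℝ 1 (uncurry f))
    (a : ℝ) {b : ℝ → ℝ} {b' x₀ : ℝ} (hb : HasDerivAt b b' x₀) :
    HasDerivAt (fun x => ∫ r in a..b x, f x r)
      ((∫ r in a..b x₀, deriv (f · r) x₀) + b' • f x₀ (b x₀)) x₀ := by
  have hcomp := (hasStrictFDerivAt_intervalIntegral_of_contDiff hf a (x₀, b x₀)).hasFDerivAt
    |>.comp_hasDerivAt x₀ ((hasDerivAt_id x₀).prodMk hb)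
  simpa [Function.comp_def] using hcomp

end Leibniz

section Incompressible

variable {u : ℝ → ℝ → ℝ} {w : ℝ → ℝ} {x ρ : ℝ}

theorem integral_deriv_mul_eq_of_incompressible (hu : ContDiff ℝ 1 (uncurry u))
    (hw : Differentiable ℝ w) (hρ : 0 ≤ ρ)
    (hincomp : ∀ r, 0 < r → r < ρ →
      deriv (fun r' => r' * w r') r + r * deriv (u · r) x = 0) :
    ∫ r in 0..ρ, deriv (u · r) x * r = -(ρ * w ρ) := by
  have hflux : ∀ r ∈ Ioo 0 ρ,
      HasDerivAt (fun r' => -(r' * w r')) (deriv (u · r) x * r) r := by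
    rintro r ⟨hr₀, hrρ⟩
    have hprod := (hasDerivAt_id' r).fun_mul (hw r).hasDerivAt
    exact hprod.neg.congr_deriv (by linear_combination -hincomp r hr₀ hrρ + hprod.deriv)
  have hcont : Continuous fun r => deriv (u · r) x * r :=
    (hu.continuous_uncurry_deriv_left.uncurry_left x).mul continuous_id
  rw [integral_eq_sub_of_hasDerivAt_of_le hρ (continuous_id.mul hw.continuous).neg.continuousOn
    hflux (hcont.intervalIntegrable 0 ρ)]
  simp

theorem hasDerivAt_integral_mul_of_incompressible {ρ : ℝ → ℝ} {ρ' : ℝ}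
    (hu : ContDiff ℝ 1 (uncurry u)) (hw : Differentiable ℝ w) (hρ : HasDerivAt ρ ρ' x)
    (hρ₀ : 0 ≤ ρ x)
    (hincomp : ∀ r, 0 < r → r < ρ x →
      deriv (fun r' => r' * w r') r + r * deriv (u · r) x = 0) :
    HasDerivAt (fun x => ∫ r in 0..ρ x, u x r * r) (ρ x * (u x (ρ x) * ρ' - w (ρ x))) x := by
  have hleibniz := hasDerivAt_intervalIntegral_of_contDiff_of_hasDerivAt
    (f := fun x r => u x r * r) (by fun_prop) 0 hρ
  have hpartial : ∀ r, deriv (fun x => u x r * r) x = deriv (u · r) x * r :=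
    fun r => ((hu.hasDerivAt_left x r).mul_const r).deriv
  simp only [hpartial, integral_deriv_mul_eq_of_incompressible hu hw hρ₀ hincomp,
    smul_eq_mul] at hleibniz
  exact hleibniz.congr_deriv (by ring)

end Incompressible

/-- Averaged incompressibility relation. If the (C¹, positive) radius
`R(x,t)`, the C¹ axial velocity `Vx(x,r,t)` and radial velocity `Vr(x,r,t)` satisfy the
incompressibility condition `∂_r(r V_r) + r ∂_x V_x = 0` for `0 < r < R(x,t)` and the
streamline boundary condition `∂_t R + V_x(x,R,t) ∂_x R = V_r(x,R,t)`, then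
`∂_t(R²) + ∂_x(R² ⟨V_x⟩) = 0`, where `⟨V_x⟩(x,t) = (2/R²) ∫₀ᴿ V_x(x,r,t) r dr`. -/
theorem averaged_incompressibility
    (R : ℝ → ℝ → ℝ) (Vx Vr : ℝ → ℝ → ℝ → ℝ)
    (hRpos : ∀ x t, 0 < R x t)
    (hR : ContDiff ℝ 1 (fun p : ℝ × ℝ => R p.1 p.2))
    (hVx : ContDiff ℝ 1 (fun p : ℝ × ℝ × ℝ => Vx p.1 p.2.1 p.2.2))
    (hVr : ContDiff ℝ 1 (fun p : ℝ × ℝ × ℝ => Vr p.1 p.2.1 p.2.2))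
    (hincomp : ∀ x t r, 0 < r → r < R x t →
      deriv (fun r' => r' * Vr x r' t) r + r * deriv (fun x' => Vx x' r t) x = 0)
    (hstream : ∀ x t,
      deriv (fun t' => R x t') t + Vx x (R x t) t * deriv (fun x' => R x' t) x
        = Vr x (R x t) t) :
    ∀ x t,
      deriv (fun t' => (R x t') ^ 2) t
        + deriv (fun x' => (R x' t) ^ 2 *
            ((2 / (R x' t) ^ 2) * ∫ r in (0:ℝ)..(R x' t), Vx x' r t * r)) x = 0 := by
  intro x t
  have hRdiff := hR.differentiable one_ne_zero
  have hVrdiff := hVr.differentiable one_ne_zero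
  have hRx : HasDerivAt (R · t) (deriv (R · t) x) x := DifferentiableAt.hasDerivAt (by fun_prop)
  have hRt : HasDerivAt (R x ·) (deriv (R x ·) t) t := DifferentiableAt.hasDerivAt (by fun_prop)
  have hflux := hasDerivAt_integral_mul_of_incompressible (u := fun x r => Vx x r t)
    (w := fun r => Vr x r t) (by fun_prop) (by fun_prop) hRx (hRpos x t).le (hincomp x t)
  have hcancel : (fun x' => (R x' t) ^ 2 *
      ((2 / (R x' t) ^ 2) * ∫ r in (0:ℝ)..(R x' t), Vx x' r t * r))
      = fun x' => 2 * ∫ r in (0:ℝ)..(R x' t), Vx x' r t * r := by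
    funext x'
    field_simp [(hRpos x' t).ne']
  rw [hcancel, (hflux.const_mul 2).deriv, (hRt.fun_pow 2).deriv]
  linear_combination (2 * R x t) * hstream x t
end

section
/- Let D > 0, R > 0, let v : [0, R] → ℝ be continuous with ⟨v⟩ = 0, let a ∈ ℝ, and define η(r) = (1/D) ∫₀ʳ (1/z) ∫₀ᶻ v(s) s ds dz. Then w := a·(η − ⟨η⟩) is the unique function, continuous on [0, R] and C² on (0, R] with bounded derivative, satisfying D(w'' + w'/r) = a·v(r) on (0, R), w'(R) = 0, and ⟨w⟩ = 0. (This identifies the first-order correction W₁ = ∂_x⟨c⟩·(η − ⟨η⟩) of the center-manifold expansion.) -/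
/-!
Write `F(r) = ∫₀ʳ v(s) s ds`. Multiplying the equation by `r` turns it into `(D r u')' = a F'`.
The candidate has `w' = a F(r) / (D r)`, so it solves the equation, `F(R) = R² ⟨v⟩ / 2 = 0` is the
Neumann condition, and subtracting `⟨η⟩` makes the average vanish. Conversely, for any solution `u`
the flux `D r u'(r) - a F(r)` is constant on `(0, R)` and tends to `0` at `0` because `u'` is
bounded, so `u' = w'`. Then `u - w` is constant on `[0, R]`, and equal averages make it `0`.
-/

/-- The radial average `⟨f⟩ = (2/R²) ∫₀ᴿ f(r) r dr`. -/
noncomputable def radAvg (R : ℝ) (f : ℝ → ℝ) : ℝ :=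
  (2 / R ^ 2) * ∫ r in (0:ℝ)..R, f r * r

/-- A function `u` solves the first-order cell problem with data `a·v`: it is continuous
on `[0,R]`, C² on `(0,R]` with bounded derivative, satisfies `D (u'' + u'/r) = a v(r)` on
`(0,R)` (derivatives within `[0,R]`), the Neumann condition `u'(R) = 0`, and `⟨u⟩ = 0`. -/
def IsCellSolution (D R a : ℝ) (v u : ℝ → ℝ) : Prop :=
  ContinuousOn u (Set.Icc 0 R) ∧
  ContDiffOn ℝ 2 u (Set.Ioc 0 R) ∧
  (∃ M, ∀ r ∈ Set.Ioo 0 R, |derivWithin u (Set.Icc 0 R) r| ≤ M) ∧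
  (∀ r ∈ Set.Ioo 0 R,
    D * (derivWithin (derivWithin u (Set.Icc 0 R)) (Set.Icc 0 R) r
      + derivWithin u (Set.Icc 0 R) r / r) = a * v r) ∧
  derivWithin u (Set.Icc 0 R) R = 0 ∧
  radAvg R u = 0

open Set Filter Topology intervalIntegral

section Calculus

variable {E : Type*} [NormedAddCommGroup E] [NormedSpace ℝ E]

theorem ContinuousOn.hasDerivWithinAt_integral_Icc [CompleteSpace E] {f : ℝ → E} {a b x : ℝ}
    (hf : ContinuousOn f (Icc a b)) (hx : x ∈ Icc a b) :
    HasDerivWithinAt (fun y => ∫ t in a..y, f t) (f x) (Icc a b) x := by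
  have : Fact (x ∈ Icc a b) := ⟨hx⟩
  refine integral_hasDerivWithinAt_right ?_
    ⟨Icc a b, self_mem_nhdsWithin, hf.aestronglyMeasurable measurableSet_Icc⟩ (hf x hx)
  refine (hf.mono ?_).intervalIntegrable
  rw [uIcc_of_le hx.1]
  exact Icc_subset_Icc_right hx.2

theorem contDiffOn_succ_of_hasDerivWithinAt {s : Set ℝ} (hs : UniqueDiffOn ℝ s) {f f' : ℝ → E}
    {n : ℕ} (hf : ∀ x ∈ s, HasDerivWithinAt f (f' x) s x) (hf' : ContDiffOn ℝ n f' s) :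
    ContDiffOn ℝ (n + 1) f s := by
  rw [contDiffOn_succ_iff_derivWithin hs]
  refine ⟨fun x hx => (hf x hx).differentiableWithinAt, by simp, ?_⟩
  exact hf'.congr fun x hx => (hf x hx).derivWithin (hs x hx)

theorem derivWithin_derivWithin_of_mem_nhds {f : ℝ → E} {s : Set ℝ} {x : ℝ} (hs : s ∈ 𝓝 x) :
    derivWithin (derivWithin f s) s x = deriv (deriv f) x := by
  rw [derivWithin_of_mem_nhds hs]
  refine EventuallyEq.deriv_eq ?_
  filter_upwards [eventually_mem_nhds_iff.2 hs] with y hy using derivWithin_of_mem_nhds hy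

theorem eqOn_zero_of_hasDerivAt_zero_of_tendsto {a b : ℝ} (hab : a < b) {f : ℝ → E}
    (hf : ∀ x ∈ Ioo a b, HasDerivAt f 0 x) (hlim : Tendsto f (𝓝[>] a) (𝓝 0)) :
    EqOn f 0 (Ioo a b) := by
  obtain ⟨c, hc⟩ := isOpen_Ioo.exists_is_const_of_deriv_eq_zero isPreconnected_Ioo
    (fun x hx => (hf x hx).differentiableAt.differentiableWithinAt) fun x hx => (hf x hx).deriv
  have hc_lim : Tendsto f (𝓝[>] a) (𝓝 c) :=
    tendsto_const_nhds.congr' <| eventually_of_mem (Ioo_mem_nhdsGT hab) fun x hx => (hc x hx).symm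
  intro x hx
  rw [hc x hx, tendsto_nhds_unique hc_lim hlim, Pi.zero_apply]

end Calculus

section RadialAverage

variable {R : ℝ} {f g : ℝ → ℝ}

theorem radAvg_congr (hR : 0 ≤ R) (h : EqOn f g (Icc 0 R)) : radAvg R f = radAvg R g := by
  unfold radAvg
  congr 1
  refine integral_congr fun r hr => ?_
  rw [uIcc_of_le hR] at hr
  simp only [h hr]

theorem radAvg_const_mul (c : ℝ) (f : ℝ → ℝ) : radAvg R (fun r => c * f r) = c * radAvg R f := by
  simp only [radAvg, mul_assoc, integral_const_mul]
  ring

theorem radAvg_add_const (hR : 0 < R) (hf : ContinuousOn f (Icc 0 R)) (c : ℝ) :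
    radAvg R (fun r => f r + c) = radAvg R f + c := by
  have hfr : IntervalIntegrable (fun r => f r * r) MeasureTheory.volume 0 R :=
    (hf.mul continuousOn_id).intervalIntegrable_of_Icc hR.le
  simp only [radAvg, add_mul, integral_add hfr (intervalIntegrable_id.const_mul c)]
  rw [integral_const_mul, integral_id]
  field_simp
  ring

end RadialAverage

section RadialProfile

variable {D R : ℝ} {v : ℝ → ℝ}

noncomputable def radialMass (v : ℝ → ℝ) (r : ℝ) : ℝ := ∫ s in (0:ℝ)..r, v s * s

noncomputable def radialMassQuotient (v : ℝ → ℝ) (r : ℝ) : ℝ := 1 / r * radialMass v r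

noncomputable def cellCorrector (D : ℝ) (v : ℝ → ℝ) (r : ℝ) : ℝ :=
  1 / D * ∫ z in (0:ℝ)..r, radialMassQuotient v z

theorem radialMass_zero : radialMass v 0 = 0 := integral_same

theorem radialMass_eq_zero_of_radAvg_eq_zero (hR : R ≠ 0) (h : radAvg R v = 0) :
    radialMass v R = 0 := by
  simpa [radAvg, radialMass, hR] using h

theorem hasDerivWithinAt_radialMass (hv : ContinuousOn v (Icc 0 R)) {r : ℝ} (hr : r ∈ Icc 0 R) :
    HasDerivWithinAt (radialMass v) (v r * r) (Icc 0 R) r :=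
  (hv.mul continuousOn_id).hasDerivWithinAt_integral_Icc hr

theorem continuousOn_radialMass (hv : ContinuousOn v (Icc 0 R)) :
    ContinuousOn (radialMass v) (Icc 0 R) :=
  fun _ hr => (hasDerivWithinAt_radialMass hv hr).continuousWithinAt

theorem slope_radialMass_zero : slope (radialMass v) 0 = radialMassQuotient v := by
  ext r
  simp [slope_def_field, radialMassQuotient, radialMass_zero, div_eq_inv_mul]

/-- At `r = 0` the quotient is `0` by the convention `1 / 0 = 0`; this is also its limit, since it
is the difference quotient at `0` of `radialMass v`, whose derivative there is `v 0 * 0`. -/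
theorem continuousOn_radialMassQuotient (hv : ContinuousOn v (Icc 0 R)) :
    ContinuousOn (radialMassQuotient v) (Icc 0 R) := by
  intro r hr
  rcases hr.1.eq_or_lt with rfl | hr0
  · have h := hasDerivWithinAt_iff_tendsto_slope.1 (hasDerivWithinAt_radialMass hv hr)
    rw [slope_radialMass_zero, mul_zero] at h
    rw [← continuousWithinAt_sdiff_self, ContinuousWithinAt]
    simpa [radialMassQuotient] using h
  · exact ((continuousAt_const.div continuousAt_id hr0.ne').continuousWithinAt).mul
      (continuousOn_radialMass hv r hr)

theorem hasDerivWithinAt_radialMassQuotient (hv : ContinuousOn v (Icc 0 R)) {r : ℝ}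
    (hr : r ∈ Ioc 0 R) :
    HasDerivWithinAt (radialMassQuotient v) (v r - radialMass v r / r ^ 2) (Icc 0 R) r := by
  have hinv : HasDerivWithinAt (fun z : ℝ => 1 / z) (-(r ^ 2)⁻¹) (Icc 0 R) r := by
    simpa only [one_div] using (hasDerivAt_inv hr.1.ne').hasDerivWithinAt
  refine (hinv.mul (hasDerivWithinAt_radialMass hv (Ioc_subset_Icc_self hr))).congr_deriv ?_
  have hr0 : r ≠ 0 := hr.1.ne'
  field_simp
  ring

theorem contDiffOn_radialMassQuotient (hv : ContinuousOn v (Icc 0 R)) :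
    ContDiffOn ℝ 1 (radialMassQuotient v) (Ioc 0 R) := by
  refine contDiffOn_succ_of_hasDerivWithinAt (n := 0) (uniqueDiffOn_Ioc 0 R)
    (fun r hr => (hasDerivWithinAt_radialMassQuotient hv hr).mono Ioc_subset_Icc_self) ?_
  refine contDiffOn_zero.2 ((hv.mono Ioc_subset_Icc_self).sub ?_)
  exact ((continuousOn_radialMass hv).mono Ioc_subset_Icc_self).div (continuousOn_pow 2)
    fun r hr => pow_ne_zero 2 hr.1.ne'

theorem hasDerivWithinAt_cellCorrector (hv : ContinuousOn v (Icc 0 R)) {r : ℝ}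
    (hr : r ∈ Icc 0 R) :
    HasDerivWithinAt (cellCorrector D v) (1 / D * radialMassQuotient v r) (Icc 0 R) r :=
  ((continuousOn_radialMassQuotient hv).hasDerivWithinAt_integral_Icc hr).const_mul _

end RadialProfile

section CellProblem

variable {D R a : ℝ} {v u w : ℝ → ℝ}

theorem isCellSolution_of_hasDerivWithinAt (hD : D ≠ 0) (hR : 0 < R)
    (hv : ContinuousOn v (Icc 0 R)) (hmass : radialMass v R = 0)
    (hw : ∀ r ∈ Icc 0 R, HasDerivWithinAt w (a / D * radialMassQuotient v r) (Icc 0 R) r)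
    (havg : radAvg R w = 0) : IsCellSolution D R a v w := by
  have hw' : EqOn (derivWithin w (Icc 0 R)) (fun r => a / D * radialMassQuotient v r) (Icc 0 R) :=
    fun r hr => (hw r hr).derivWithin (uniqueDiffOn_Icc hR r hr)
  have hcont : ContinuousOn (fun r => a / D * radialMassQuotient v r) (Icc 0 R) :=
    continuousOn_const.mul (continuousOn_radialMassQuotient hv)
  obtain ⟨M, hM⟩ := isCompact_Icc.exists_bound_of_continuousOn hcont
  refine ⟨fun r hr => (hw r hr).continuousWithinAt, ?_, ⟨M, fun r hr => ?_⟩, fun r hr => ?_, ?_,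
    havg⟩
  · exact contDiffOn_succ_of_hasDerivWithinAt (n := 1) (uniqueDiffOn_Ioc 0 R)
      (fun r hr => (hw r (Ioc_subset_Icc_self hr)).mono Ioc_subset_Icc_self)
      (contDiffOn_const.mul (contDiffOn_radialMassQuotient hv))
  · rw [hw' (Ioo_subset_Icc_self hr), ← Real.norm_eq_abs]
    exact hM r (Ioo_subset_Icc_self hr)
  · have hr' : r ∈ Icc 0 R := Ioo_subset_Icc_self hr
    have hr0 : r ≠ 0 := hr.1.ne'
    rw [derivWithin_congr hw' (hw' hr'), hw' hr',
      (((hasDerivWithinAt_radialMassQuotient hv ⟨hr.1, hr.2.le⟩).const_mul (a / D)).derivWithin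
        (uniqueDiffOn_Icc hR r hr'))]
    simp only [radialMassQuotient]
    field_simp
    ring
  · simp [hw' (right_mem_Icc.2 hR.le), radialMassQuotient, hmass]

theorem isCellSolution_cellCorrector (hD : D ≠ 0) (hR : 0 < R) (hv : ContinuousOn v (Icc 0 R))
    (havg : radAvg R v = 0) :
    IsCellSolution D R a v fun r => a * (cellCorrector D v r - radAvg R (cellCorrector D v)) := by
  have hη := fun r (hr : r ∈ Icc 0 R) => hasDerivWithinAt_cellCorrector (D := D) hv hr
  refine isCellSolution_of_hasDerivWithinAt hD hR hv
    (radialMass_eq_zero_of_radAvg_eq_zero hR.ne' havg) (fun r hr => ?_) ?_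
  · exact (((hη r hr).sub_const _).const_mul a).congr_deriv (by ring)
  · refine (radAvg_const_mul a _).trans ?_
    simp only [sub_eq_add_neg, radAvg_add_const hR fun r hr => (hη r hr).continuousWithinAt,
      add_neg_cancel, mul_zero]

theorem IsCellSolution.hasDerivAt_flux (hv : ContinuousOn v (Icc 0 R))
    (hu : IsCellSolution D R a v u) {r : ℝ} (hr : r ∈ Ioo 0 R) :
    HasDerivAt (fun r => D * (r * deriv u r) - a * radialMass v r) 0 r := by
  have hIcc : Icc 0 R ∈ 𝓝 r := Icc_mem_nhds hr.1 hr.2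
  obtain ⟨-, hu2, -, hpde, -, -⟩ := hu
  have hu' : HasDerivAt (deriv u) (deriv (deriv u) r) r :=
    (((hu2.mono Ioo_subset_Ioc_self).deriv_of_isOpen isOpen_Ioo (m := 1) (by norm_num)
      |>.differentiableOn one_ne_zero r hr).differentiableAt (isOpen_Ioo.mem_nhds hr)).hasDerivAt
  have hpde := hpde r hr
  rw [derivWithin_derivWithin_of_mem_nhds hIcc, derivWithin_of_mem_nhds hIcc] at hpde
  refine ((((hasDerivAt_id r).mul hu').const_mul D).sub
    (((hasDerivWithinAt_radialMass hv (Ioo_subset_Icc_self hr)).hasDerivAt hIcc).const_mul a))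
    |>.congr_deriv ?_
  have hr0 : r ≠ 0 := hr.1.ne'
  field_simp at hpde
  simp only [id, one_mul]
  linear_combination hpde

theorem IsCellSolution.tendsto_flux (hR : 0 < R) (hv : ContinuousOn v (Icc 0 R))
    (hu : IsCellSolution D R a v u) :
    Tendsto (fun r => D * (r * deriv u r) - a * radialMass v r) (𝓝[>] 0) (𝓝 0) := by
  obtain ⟨-, -, ⟨M, hM⟩, -, -, -⟩ := hu
  have hbdd : IsBoundedUnder (· ≤ ·) (𝓝[>] 0) (norm ∘ deriv u) := by
    refine isBoundedUnder_of_eventually_le (a := M) ?_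
    filter_upwards [Ioo_mem_nhdsGT hR] with r hr
    rw [Function.comp_apply, Real.norm_eq_abs, ← derivWithin_of_mem_nhds (Icc_mem_nhds hr.1 hr.2)]
    exact hM r hr
  have hmass : Tendsto (radialMass v) (𝓝[>] 0) (𝓝 0) := by
    have h := continuousOn_radialMass hv 0 (left_mem_Icc.2 hR.le)
    rw [ContinuousWithinAt, radialMass_zero] at h
    exact h.mono_left (nhdsWithin_Ioo_eq_nhdsGT hR ▸ nhdsWithin_mono _ Ioo_subset_Icc_self)
  have hflux := ((tendsto_nhdsWithin_of_tendsto_nhds tendsto_id).zero_mul_isBoundedUnder_le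
    hbdd).const_mul D |>.sub (hmass.const_mul a)
  simpa using hflux

theorem IsCellSolution.deriv_eqOn (hD : D ≠ 0) (hR : 0 < R) (hv : ContinuousOn v (Icc 0 R))
    (hu : IsCellSolution D R a v u) :
    EqOn (deriv u) (fun r => a / D * radialMassQuotient v r) (Ioo 0 R) := by
  intro r hr
  have h := eqOn_zero_of_hasDerivAt_zero_of_tendsto hR (fun r hr => hu.hasDerivAt_flux hv hr)
    (hu.tendsto_flux hR hv) hr
  have hr0 : r ≠ 0 := hr.1.ne'
  simp only [Pi.zero_apply, sub_eq_zero] at h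
  simp only [radialMassQuotient]
  field_simp
  linear_combination h

theorem IsCellSolution.eqOn (hD : D ≠ 0) (hR : 0 < R) (hv : ContinuousOn v (Icc 0 R))
    (hu : IsCellSolution D R a v u) (hw : IsCellSolution D R a v w) : EqOn u w (Icc 0 R) := by
  have hdiff : ∀ {f}, IsCellSolution D R a v f → DifferentiableOn ℝ f (Ioo 0 R) :=
    fun hf => (hf.2.1.mono Ioo_subset_Ioc_self).differentiableOn (by norm_num)
  obtain ⟨c, hc⟩ := isOpen_Ioo.exists_eq_add_of_deriv_eq isPreconnected_Ioo (hdiff hw) (hdiff hu)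
    fun r hr => (hw.deriv_eqOn hD hR hv hr).trans (hu.deriv_eqOn hD hR hv hr).symm
  obtain ⟨huc, -, -, -, -, hu_avg⟩ := hu
  obtain ⟨hwc, -, -, -, -, hw_avg⟩ := hw
  have hc' : EqOn w (u · + c) (Icc 0 R) :=
    hc.of_subset_closure hwc (huc.add continuousOn_const) Ioo_subset_Icc_self
      (closure_Ioo hR.ne).superset
  have hc0 : c = 0 := by
    have h := radAvg_congr hR.le hc'
    rw [radAvg_add_const hR huc, hu_avg, hw_avg] at h
    linarith
  intro r hr
  simp [hc' hr, hc0]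

end CellProblem

/-- Let `D > 0`, `R > 0`, `v` continuous on `[0,R]` with `⟨v⟩ = 0`, `a ∈ ℝ`,
and `η(r) = (1/D) ∫₀ʳ (1/z) ∫₀ᶻ v(s) s ds dz`. Then `w := a (η - ⟨η⟩)` is the unique
solution of the cell problem: it satisfies the problem, and any solution coincides with it
on `[0,R]`. (This identifies `W₁ = ∂ₓ⟨c⟩ (η - ⟨η⟩)`.) -/
theorem cell_problem_unique_solution
    (D R a : ℝ) (hD : 0 < D) (hR : 0 < R)
    (v : ℝ → ℝ) (hv : ContinuousOn v (Set.Icc 0 R))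
    (havg : radAvg R v = 0)
    (η : ℝ → ℝ)
    (hη : η = fun r => (1 / D) * ∫ z in (0:ℝ)..r, (1 / z) * ∫ s in (0:ℝ)..z, v s * s)
    (w : ℝ → ℝ) (hw : w = fun r => a * (η r - radAvg R η)) :
    IsCellSolution D R a v w ∧
    ∀ u : ℝ → ℝ, IsCellSolution D R a v u → Set.EqOn u w (Set.Icc 0 R) := by
  have hsol : IsCellSolution D R a v w := by
    subst hw hη
    exact isCellSolution_cellCorrector hD.ne' hR hv havg
  exact ⟨hsol, fun u hu => hu.eqOn hD.ne' hR hv hsol⟩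
end

section
/- Let γ > 0, R > 0, U ∈ ℝ, D > 0. Let v(r) = (U/γ)(2 − (γ+2)(r/R)^γ) and η(r) = (U/(γD))( r²/2 − r^{γ+2}/((γ+2) R^γ) ). Then the dispersion coefficient of the reduced transport equation satisfies R² · (2/R²) ∫₀ᴿ η(r) v(r) r dr = −(β(γ)/D) (R² U)², where β(γ) = 1 / (2(γ+2)(γ+4)). Equivalently, (2/R²) ∫₀ᴿ η v r dr = −R² U² / (2(γ+2)(γ+4) D). -/
/-- For the no-slip profile, with fluctuation
`v(r) = (U/γ)(2 - (γ+2)(r/R)^γ)` and corrector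
`η(r) = (U/(γD))( r²/2 - r^{γ+2}/((γ+2) R^γ) )`, the dispersion coefficient satisfies
`R² ⟨η v⟩ = -(β(γ)/D) (R² U)²` with `β(γ) = 1/(2(γ+2)(γ+4))`; equivalently
`⟨η v⟩ = -R² U² / (2(γ+2)(γ+4) D)`. -/
theorem no_slip_dispersion_coefficient
    (γ R U D : ℝ) (hγ : 0 < γ) (hR : 0 < R) (hD : 0 < D)
    (v η : ℝ → ℝ)
    (hv : v = fun r => (U / γ) * (2 - (γ + 2) * (r / R) ^ γ))
    (hη : η = fun r => (U / (γ * D)) * (r ^ 2 / 2 - r ^ (γ + 2) / ((γ + 2) * R ^ γ))) :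
    R ^ 2 * ((2 / R ^ 2) * ∫ r in (0:ℝ)..R, η r * v r * r)
      = -((1 / (2 * (γ + 2) * (γ + 4))) / D) * (R ^ 2 * U) ^ 2 ∧
    ((2 / R ^ 2) * ∫ r in (0:ℝ)..R, η r * v r * r)
      = -(R ^ 2 * U ^ 2) / (2 * (γ + 2) * (γ + 4) * D) := by
  have hγ' : γ ≠ 0 := hγ.ne'
  have hR' : R ≠ 0 := hR.ne'
  have hD' : D ≠ 0 := hD.ne'
  have hRγ : (0:ℝ) < R ^ γ := Real.rpow_pos_of_pos hR γ
  have hRγ' : R ^ γ ≠ 0 := hRγ.ne'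
  have hγ2 : γ + 2 ≠ 0 := by positivity
  have hγ4 : γ + 4 ≠ 0 := by positivity
  set C : ℝ := U ^ 2 / (γ ^ 2 * D) with hC
  set a : ℝ := -((γ + 2) / (2 * R ^ γ) + 2 / ((γ + 2) * R ^ γ)) with ha
  set b : ℝ := 1 / (R ^ γ) ^ 2 with hb
  have key : (∫ r in (0:ℝ)..R, η r * v r * r)
      = ∫ r in (0:ℝ)..R, C * (r ^ (3:ℝ) + a * r ^ (γ + 3) + b * r ^ (2 * γ + 3)) := by
    apply intervalIntegral.integral_congr
    intro r hr
    rw [Set.uIcc_of_le hR.le] at hr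
    rcases eq_or_lt_of_le hr.1 with h0 | h0
    · subst hv hη
      simp [← h0, Real.zero_rpow, hγ', (by positivity : γ + 3 ≠ 0),
        (by positivity : 2 * γ + 3 ≠ 0), (by norm_num : (3:ℝ) ≠ 0)]
    · have e1 : (r / R) ^ γ = r ^ γ / R ^ γ := Real.div_rpow h0.le hR.le γ
      have e2 : r ^ (γ + 2) = r ^ γ * r ^ 2 := by
        rw [show γ + 2 = γ + ((2:ℕ):ℝ) by norm_num, Real.rpow_add h0, Real.rpow_natCast]
      have e3 : r ^ (γ + 3) = r ^ γ * r ^ 3 := by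
        rw [show γ + 3 = γ + ((3:ℕ):ℝ) by norm_num, Real.rpow_add h0, Real.rpow_natCast]
      have e4 : r ^ (2 * γ + 3) = (r ^ γ) ^ 2 * r ^ 3 := by
        rw [show 2 * γ + 3 = γ + (γ + 3) by ring, Real.rpow_add h0, e3]; ring
      have e5 : r ^ (3:ℝ) = r ^ 3 := by
        rw [show (3:ℝ) = ((3:ℕ):ℝ) by norm_num, Real.rpow_natCast]
      subst hv hη
      simp only [e1, e2, e3, e4, e5, hC, ha, hb]
      field_simp
      ring
  have i1 : IntervalIntegrable (fun r : ℝ => r ^ (3:ℝ)) MeasureTheory.volume 0 R :=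
    intervalIntegral.intervalIntegrable_rpow (Or.inl (by norm_num))
  have i2 : IntervalIntegrable (fun r : ℝ => r ^ (γ + 3)) MeasureTheory.volume 0 R :=
    intervalIntegral.intervalIntegrable_rpow (Or.inl (by positivity))
  have i3 : IntervalIntegrable (fun r : ℝ => r ^ (2 * γ + 3)) MeasureTheory.volume 0 R :=
    intervalIntegral.intervalIntegrable_rpow (Or.inl (by positivity))
  have val : (∫ r in (0:ℝ)..R, η r * v r * r)
      = C * (R ^ 4 / 4 + a * (R ^ γ * R ^ 4 / (γ + 4)) + b * ((R ^ γ) ^ 2 * R ^ 4 / (2 * γ + 4))) := by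
    rw [key]
    rw [intervalIntegral.integral_const_mul]
    rw [intervalIntegral.integral_add (i1.add (i2.const_mul a)) (i3.const_mul b),
        intervalIntegral.integral_add i1 (i2.const_mul a),
        intervalIntegral.integral_const_mul, intervalIntegral.integral_const_mul]
    rw [integral_rpow (Or.inl (by norm_num)),
        integral_rpow (Or.inl (by linarith)),
        integral_rpow (Or.inl (by linarith))]
    have z1 : (0:ℝ) ^ ((3:ℝ) + 1) = 0 := Real.zero_rpow (by norm_num)
    have z2 : (0:ℝ) ^ (γ + 3 + 1) = 0 := Real.zero_rpow (by positivity)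
    have z3 : (0:ℝ) ^ (2 * γ + 3 + 1) = 0 := Real.zero_rpow (by positivity)
    have w1 : R ^ ((3:ℝ) + 1) = R ^ 4 := by
      rw [show (3:ℝ) + 1 = ((4:ℕ):ℝ) by norm_num, Real.rpow_natCast]
    have w2 : R ^ (γ + 3 + 1) = R ^ γ * R ^ 4 := by
      rw [show γ + 3 + 1 = γ + ((4:ℕ):ℝ) by push_cast; ring, Real.rpow_add hR, Real.rpow_natCast]
    have w3 : R ^ (2 * γ + 3 + 1) = (R ^ γ) ^ 2 * R ^ 4 := by
      rw [show 2 * γ + 3 + 1 = γ + (γ + ((4:ℕ):ℝ)) by push_cast; ring,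
        Real.rpow_add hR, Real.rpow_add hR, Real.rpow_natCast]; ring
    rw [z1, z2, z3, w1, w2, w3]
    ring
  have h2γ4 : 2 * γ + 4 ≠ 0 := by positivity
  have main : ((2 / R ^ 2) * ∫ r in (0:ℝ)..R, η r * v r * r)
      = -(R ^ 2 * U ^ 2) / (2 * (γ + 2) * (γ + 4) * D) := by
    rw [val, hC, ha, hb]
    field_simp
    ring
  refine ⟨?_, main⟩
  rw [main]
  field_simp
end
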